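/- arXiv:2410.20107 — 6 statements merged into one kernel-verified Lean document; each statement's English description precedes it below -/
import Mathlib

section
/- Let κ be a nonlinear kernel map. Then there exists a point ρ* ∈ [0,1] with κ(ρ*) = ρ* such that for every initial value ρ_0 ∈ (-1,1), the kernel sequence ρ_{ℓ+1} = κ(ρ_ℓ) converges to ρ* as ℓ → ∞; moreover ρ* is the unique point of [0,1] with this property. -/
open Filter

/-- The kernel map associated to nonnegative coefficients `a`. -/
noncomputable def kernelMap (a : ℕ → ℝ) (ρ : ℝ) : ℝ := ∑' k, a k * ρ ^ k

/-!
On `[0, 1]` the kernel map `κ` is monotone and, being nonlinear, strictly convex with `κ 1 = 1`,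
so it has at most one fixed point `q < 1` there. If it has one, every `x ^ k` lies above its
tangent at `q`, which sums to `κ' q < 1` (where `κ' = kernelDeriv a`); by continuity
`κ' r < 1` for some `r > q`, and `|κ x - κ y| ≤ κ' r * |x - y|` on `[-r, r]` makes `κ` a
contraction toward `q` there. Every orbit enters `[-r, r]`, because `|κⁿ x| ≤ κⁿ |x|` and
orbits in `[q, 1)` decrease to `q`.
If there is no fixed point in `[0, 1)`, then `s < κ s` on `(-1, 1)`: on `[0, 1)` by the
intermediate value theorem since `κ 0 = a 0 > 0`, and on `[-1, 0]` because there
`κ s ≥ a 0 + (1 - a 0) s`. So orbits increase to `1`.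
Either way the limit is that of the orbit of `0`, hence unique.
-/

open Set Function Topology

variable {a : ℕ → ℝ}

lemma summable_mul_pow_of_abs_le_one (hs : Summable a) {ρ : ℝ} (hρ : |ρ| ≤ 1) :
    Summable fun k => a k * ρ ^ k :=
  hs.abs.of_norm_bounded fun k => by
    rw [norm_mul, norm_pow, Real.norm_eq_abs, Real.norm_eq_abs]
    exact mul_le_of_le_one_right (abs_nonneg _) (pow_le_one₀ (abs_nonneg ρ) hρ)

lemma kernelMap_zero : kernelMap a 0 = a 0 := by
  rw [kernelMap, tsum_eq_single 0 fun k hk => by simp [hk]]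
  simp

lemma kernelMap_one (hsum : HasSum a 1) : kernelMap a 1 = 1 := by
  simp [kernelMap, hsum.tsum_eq]

lemma kernelMap_monotoneOn (ha : ∀ k, 0 ≤ a k) (hs : Summable a) :
    MonotoneOn (kernelMap a) (Icc 0 1) := fun _ hx _ hy hxy =>
  Summable.tsum_le_tsum (fun k => mul_le_mul_of_nonneg_left (pow_le_pow_left₀ hx.1 hxy k) (ha k))
    (summable_mul_pow_of_abs_le_one hs ((abs_of_nonneg hx.1).trans_le hx.2))
    (summable_mul_pow_of_abs_le_one hs ((abs_of_nonneg hy.1).trans_le hy.2))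

lemma mapsTo_kernelMap_Icc (ha : ∀ k, 0 ≤ a k) (hsum : HasSum a 1) :
    MapsTo (kernelMap a) (Icc 0 1) (Icc 0 1) := fun _ hx =>
  ⟨tsum_nonneg fun k => mul_nonneg (ha k) (pow_nonneg hx.1 k),
    kernelMap_one hsum ▸
      kernelMap_monotoneOn ha hsum.summable hx (right_mem_Icc.2 zero_le_one) hx.2⟩

lemma abs_kernelMap_le (ha : ∀ k, 0 ≤ a k) (hs : Summable a) {ρ : ℝ} (hρ : |ρ| ≤ 1) :
    |kernelMap a ρ| ≤ kernelMap a |ρ| := by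
  have hterm : ∀ k, ‖a k * ρ ^ k‖ ≤ a k * |ρ| ^ k := fun k => by
    rw [norm_mul, norm_pow, Real.norm_eq_abs, Real.norm_eq_abs, abs_of_nonneg (ha k)]
  simpa only [Real.norm_eq_abs, kernelMap] using
    tsum_of_norm_bounded (summable_mul_pow_of_abs_le_one hs (by rwa [abs_abs])).hasSum hterm

lemma kernelMap_lt_one (ha : ∀ k, 0 ≤ a k) (hsum : HasSum a 1) {K : ℕ} (hK : K ≠ 0)
    (haK : 0 < a K) {t : ℝ} (ht0 : 0 ≤ t) (ht1 : t < 1) : kernelMap a t < 1 := by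
  rw [← hsum.tsum_eq]
  refine Summable.tsum_lt_tsum (i := K)
    (fun k => mul_le_of_le_one_right (ha k) (pow_le_one₀ ht0 ht1.le))
    (mul_lt_of_lt_one_right haK (pow_lt_one₀ ht0 ht1 hK))
    (summable_mul_pow_of_abs_le_one hsum.summable ((abs_of_nonneg ht0).trans_le ht1.le))
    hsum.summable

lemma mapsTo_kernelMap_Ioo (ha : ∀ k, 0 ≤ a k) (hsum : HasSum a 1) {K : ℕ} (hK : K ≠ 0)
    (haK : 0 < a K) : MapsTo (kernelMap a) (Ioo (-1) 1) (Ioo (-1) 1) := fun x hx => by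
  have hx' : |x| < 1 := abs_lt.2 hx
  exact abs_lt.1 <| (abs_kernelMap_le ha hsum.summable hx'.le).trans_lt <|
    kernelMap_lt_one ha hsum hK haK (abs_nonneg x) hx'

lemma continuousOn_kernelMap (hs : Summable a) : ContinuousOn (kernelMap a) (Icc (-1) 1) :=
  continuousOn_tsum (fun k => (continuous_const.mul (continuous_pow k)).continuousOn) hs.abs
    fun k ρ hρ => by
      rw [norm_mul, norm_pow, Real.norm_eq_abs, Real.norm_eq_abs]
      exact mul_le_of_le_one_right (abs_nonneg _) (pow_le_one₀ (abs_nonneg ρ) (abs_le.2 hρ))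

lemma continuousAt_kernelMap (hs : Summable a) {x : ℝ}
    (hx : x ∈ Ioo (-1) 1) : ContinuousAt (kernelMap a) x :=
  (continuousOn_kernelMap hs).continuousAt (Icc_mem_nhds hx.1 hx.2)

lemma strictConvexOn_kernelMap (ha : ∀ k, 0 ≤ a k) (hs : Summable a) {K : ℕ} (hK : 2 ≤ K)
    (haK : 0 < a K) : StrictConvexOn ℝ (Icc 0 1) (kernelMap a) := by
  refine ⟨convex_Icc 0 1, fun x hx y hy hxy α β hα hβ hαβ => ?_⟩
  have hsx := summable_mul_pow_of_abs_le_one hs ((abs_of_nonneg hx.1).trans_le hx.2)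
  have hsy := summable_mul_pow_of_abs_le_one hs ((abs_of_nonneg hy.1).trans_le hy.2)
  have hz : α • x + β • y ∈ Icc (0 : ℝ) 1 := convex_Icc 0 1 hx hy hα.le hβ.le hαβ
  simp only [smul_eq_mul, kernelMap, ← tsum_mul_left] at hz ⊢
  rw [← (hsx.mul_left α).tsum_add (hsy.mul_left β)]
  refine Summable.tsum_lt_tsum (i := K) (fun k => ?_) ?_
    (summable_mul_pow_of_abs_le_one hs ((abs_of_nonneg hz.1).trans_le hz.2))
    ((hsx.mul_left α).add (hsy.mul_left β))
  · have := (convexOn_pow k).2 (mem_Ici.2 hx.1) (mem_Ici.2 hy.1) hα.le hβ.le hαβ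
    simp only [smul_eq_mul] at this
    nlinarith [ha k]
  · have := (strictConvexOn_pow hK).2 (mem_Ici.2 hx.1) (mem_Ici.2 hy.1) hxy hα hβ hαβ
    simp only [smul_eq_mul] at this
    nlinarith

lemma kernelMap_lt_self (ha : ∀ k, 0 ≤ a k) (hsum : HasSum a 1) {K : ℕ} (hK : 2 ≤ K)
    (haK : 0 < a K) {q t : ℝ} (hq0 : 0 ≤ q) (hfix : kernelMap a q = q) (hqt : q < t)
    (ht1 : t < 1) : kernelMap a t < t := by
  have := (strictConvexOn_kernelMap ha hsum.summable hK haK).secant_strict_mono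
    (a := q) (x := t) (y := 1) ⟨hq0, by linarith⟩ ⟨by linarith, ht1.le⟩
    (right_mem_Icc.2 zero_le_one) hqt.ne' (by linarith) ht1
  rw [hfix, kernelMap_one hsum, div_self (by linarith), div_lt_one (by linarith)] at this
  linarith

lemma le_kernelMap_of_nonpos (ha : ∀ k, 0 ≤ a k) (hsum : HasSum a 1) {s : ℝ}
    (hs1 : -1 ≤ s) (hs0 : s ≤ 0) : a 0 + (1 - a 0) * s ≤ kernelMap a s := by
  have hchord : HasSum (fun k => (if k = 0 then a 0 * (1 - s) else 0) + a k * s)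
      (a 0 * (1 - s) + 1 * s) :=
    (hasSum_ite_eq 0 (a 0 * (1 - s))).add (hsum.mul_right s)
  calc a 0 + (1 - a 0) * s = a 0 * (1 - s) + 1 * s := by ring
    _ = ∑' k, ((if k = 0 then a 0 * (1 - s) else 0) + a k * s) := hchord.tsum_eq.symm
    _ ≤ kernelMap a s := by
      refine hchord.summable.tsum_le_tsum (fun k => ?_)
        (summable_mul_pow_of_abs_le_one hsum.summable (abs_le.2 ⟨hs1, by linarith⟩))
      rcases Nat.eq_zero_or_pos k with rfl | hk
      · exact le_of_eq (by simp only [↓reduceIte, pow_zero]; ring)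
      · have : s ≤ s ^ k := by
          have h := pow_le_of_le_one (abs_nonneg s) (abs_le.2 ⟨hs1, by linarith⟩) hk.ne'
          rw [← abs_pow, abs_of_nonpos hs0] at h
          linarith [neg_abs_le (s ^ k)]
        simpa [hk.ne'] using mul_le_mul_of_nonneg_left this (ha k)

noncomputable def kernelDeriv (a : ℕ → ℝ) (r : ℝ) : ℝ := ∑' k, a k * (k * r ^ (k - 1))

lemma summable_natCast_mul_pow_pred {r : ℝ} (hr0 : 0 ≤ r) (hr1 : r < 1) :
    Summable fun k : ℕ => (k : ℝ) * r ^ (k - 1) := by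
  have hr : ‖r‖ < 1 := by rwa [Real.norm_eq_abs, abs_of_nonneg hr0]
  refine (summable_nat_add_iff 1).1 <|
    ((summable_pow_mul_geometric_of_norm_lt_one 1 hr).add
      (summable_geometric_of_norm_lt_one hr)).congr fun j => ?_
  simp only [pow_one, Nat.add_sub_cancel, Nat.cast_add, Nat.cast_one]
  ring

lemma summable_kernelDeriv (ha : ∀ k, 0 ≤ a k) (hsum : HasSum a 1) {r : ℝ} (hr0 : 0 ≤ r)
    (hr1 : r < 1) : Summable fun k => a k * (k * r ^ (k - 1)) :=
  (summable_natCast_mul_pow_pred hr0 hr1).of_nonneg_of_le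
    (fun k => mul_nonneg (ha k) (by positivity))
    (fun k => mul_le_of_le_one_left (by positivity) (le_hasSum hsum k fun j _ => ha j))

lemma kernelDeriv_nonneg (ha : ∀ k, 0 ≤ a k) {r : ℝ} (hr0 : 0 ≤ r) :
    0 ≤ kernelDeriv a r :=
  tsum_nonneg fun k => mul_nonneg (ha k) (by positivity)

lemma abs_kernelMap_sub_le (ha : ∀ k, 0 ≤ a k) (hsum : HasSum a 1) {r x y : ℝ} (hr1 : r < 1)
    (hx : |x| ≤ r) (hy : |y| ≤ r) :
    |kernelMap a x - kernelMap a y| ≤ kernelDeriv a r * |x - y| := by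
  have hr0 : 0 ≤ r := (abs_nonneg x).trans hx
  have hterm : ∀ k, ‖a k * x ^ k - a k * y ^ k‖ ≤ a k * (k * r ^ (k - 1)) * |x - y| := by
    intro k
    rw [Real.norm_eq_abs, ← mul_sub, abs_mul, abs_of_nonneg (ha k), mul_assoc]
    refine mul_le_mul_of_nonneg_left ((abs_pow_sub_pow_le x y k).trans ?_) (ha k)
    calc |x - y| * k * max |x| |y| ^ (k - 1) ≤ |x - y| * k * r ^ (k - 1) := by
          gcongr; exact max_le hx hy
      _ = k * r ^ (k - 1) * |x - y| := by ring
  have hsx := summable_mul_pow_of_abs_le_one hsum.summable (hx.trans hr1.le)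
  have hsy := summable_mul_pow_of_abs_le_one hsum.summable (hy.trans hr1.le)
  rw [kernelMap, kernelMap, ← hsx.tsum_sub hsy, kernelDeriv, ← tsum_mul_right]
  simpa only [Real.norm_eq_abs] using
    tsum_of_norm_bounded ((summable_kernelDeriv ha hsum hr0 hr1).mul_right |x - y|).hasSum hterm

lemma continuousOn_kernelDeriv (ha : ∀ k, 0 ≤ a k) (hsum : HasSum a 1) {r : ℝ} (hr0 : 0 ≤ r)
    (hr1 : r < 1) : ContinuousOn (kernelDeriv a) (Icc (-r) r) :=
  continuousOn_tsum (fun k => by fun_prop) (summable_kernelDeriv ha hsum hr0 hr1)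
    fun k x hx => by
      rw [Real.norm_eq_abs, abs_mul, abs_of_nonneg (ha k), abs_mul, Nat.abs_cast, abs_pow]
      exact mul_le_mul_of_nonneg_left (mul_le_mul_of_nonneg_left
        (pow_le_pow_left₀ (abs_nonneg x) (abs_le.2 hx) _) k.cast_nonneg) (ha k)

lemma natCast_mul_pow_pred_mul_one_sub_lt {q : ℝ} (hq0 : 0 ≤ q) (hq1 : q < 1) {k : ℕ}
    (hk : 2 ≤ k) :
    k * q ^ (k - 1) * (1 - q) < 1 - q ^ k := by
  have := (strictConvexOn_pow hk).lt_slope_of_hasDerivAt (mem_Ici.2 hq0) (mem_Ici.2 zero_le_one)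
    hq1 (hasDerivAt_pow k q)
  rwa [slope_def_field, one_pow, lt_div_iff₀ (by linarith)] at this

lemma natCast_mul_pow_pred_mul_one_sub_le {q : ℝ} (hq0 : 0 ≤ q) (hq1 : q < 1) (k : ℕ) :
    k * q ^ (k - 1) * (1 - q) ≤ 1 - q ^ k := by
  rcases lt_or_ge k 2 with hk | hk
  · interval_cases k <;> simp
  · exact (natCast_mul_pow_pred_mul_one_sub_lt hq0 hq1 hk).le

lemma kernelDeriv_lt_one (ha : ∀ k, 0 ≤ a k) (hsum : HasSum a 1) {K : ℕ} (hK : 2 ≤ K)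
    (haK : 0 < a K) {q : ℝ} (hq0 : 0 ≤ q) (hq1 : q < 1) (hfix : kernelMap a q = q) :
    kernelDeriv a q < 1 := by
  have hsq := summable_mul_pow_of_abs_le_one hsum.summable ((abs_of_nonneg hq0).trans_le hq1.le)
  have key : kernelDeriv a q * (1 - q) < 1 - q := by
    calc kernelDeriv a q * (1 - q) = ∑' k, a k * (k * q ^ (k - 1) * (1 - q)) := by
          rw [kernelDeriv, ← tsum_mul_right]; simp only [mul_assoc]
      _ < ∑' k, (a k - a k * q ^ k) := by
          refine Summable.tsum_lt_tsum (i := K) (fun k => ?_) ?_ ?_ (hsum.summable.sub hsq)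
          · rw [← mul_one_sub]
            exact mul_le_mul_of_nonneg_left (natCast_mul_pow_pred_mul_one_sub_le hq0 hq1 k)
              (ha k)
          · rw [← mul_one_sub]
            exact mul_lt_mul_of_pos_left (natCast_mul_pow_pred_mul_one_sub_lt hq0 hq1 hK) haK
          · simpa only [mul_assoc] using (summable_kernelDeriv ha hsum hq0 hq1).mul_right (1 - q)
      _ = 1 - q := by rw [hsum.summable.tsum_sub hsq, hsum.tsum_eq]; exact congrArg _ hfix
  exact (mul_lt_iff_lt_one_left (by linarith)).1 key

lemma exists_gt_kernelDeriv_lt_one (ha : ∀ k, 0 ≤ a k) (hsum : HasSum a 1) {K : ℕ}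
    (hK : 2 ≤ K) (haK : 0 < a K) {q : ℝ} (hq0 : 0 ≤ q) (hq1 : q < 1)
    (hfix : kernelMap a q = q) : ∃ r, q < r ∧ r < 1 ∧ kernelDeriv a r < 1 := by
  have hcont : ContinuousAt (kernelDeriv a) q :=
    (continuousOn_kernelDeriv ha hsum (r := (1 + q) / 2) (by positivity)
      (by linarith)).continuousAt (Icc_mem_nhds (by linarith) (by linarith))
  have hev : ∀ᶠ r in 𝓝[>] q, r < 1 ∧ kernelDeriv a r < 1 :=
    nhdsWithin_le_nhds <| (eventually_lt_nhds hq1).and <|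
      hcont.eventually (eventually_lt_nhds (kernelDeriv_lt_one ha hsum hK haK hq0 hq1 hfix))
  obtain ⟨r, hr, hqr⟩ := (hev.and self_mem_nhdsWithin).exists
  exact ⟨r, hqr, hr⟩

lemma tendsto_iterate_kernelMap_of_abs_le (ha : ∀ k, 0 ≤ a k) (hsum : HasSum a 1) {q r : ℝ}
    (hq0 : 0 ≤ q) (hqr : q ≤ r) (hr1 : r < 1) (hfix : kernelMap a q = q)
    (hD : kernelDeriv a r < 1) {y : ℝ} (hy : |y| ≤ r) :
    Tendsto (fun n => (kernelMap a)^[n] y) atTop (𝓝 q) := by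
  have hq : |q| ≤ r := by rwa [abs_of_nonneg hq0]
  have hD0 : 0 ≤ kernelDeriv a r := kernelDeriv_nonneg ha (hq0.trans hqr)
  have hcontract : ∀ {x}, |x| ≤ r → |kernelMap a x - q| ≤ kernelDeriv a r * |x - q| :=
    fun hx => by simpa only [hfix] using abs_kernelMap_sub_le ha hsum hr1 hx hq
  have hr_self : kernelMap a r ≤ r := by
    have := (le_abs_self _).trans ((hcontract (abs_of_nonneg (hq0.trans hqr)).le).trans
      (mul_le_of_le_one_left (abs_nonneg _) hD.le))
    rw [abs_of_nonneg (sub_nonneg.2 hqr)] at this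
    linarith
  have hinv : ∀ {x}, |x| ≤ r → |kernelMap a x| ≤ r := fun hx =>
    (abs_kernelMap_le ha hsum.summable (hx.trans hr1.le)).trans <|
      (kernelMap_monotoneOn ha hsum.summable ⟨abs_nonneg _, hx.trans hr1.le⟩
        ⟨(abs_nonneg _).trans hx, hr1.le⟩ hx).trans hr_self
  have hgeom : ∀ n, |(kernelMap a)^[n] y| ≤ r ∧
      |(kernelMap a)^[n] y - q| ≤ kernelDeriv a r ^ n * |y - q| := by
    intro n
    induction n with
    | zero => simpa using hy
    | succ n ih =>
      rw [iterate_succ_apply', pow_succ', mul_assoc]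
      exact ⟨hinv ih.1, (hcontract ih.1).trans (mul_le_mul_of_nonneg_left ih.2 hD0)⟩
  refine tendsto_iff_dist_tendsto_zero.2 <| squeeze_zero (fun n => dist_nonneg)
    (fun n => (Real.dist_eq _ _).trans_le (hgeom n).2) ?_
  simpa using (tendsto_pow_atTop_nhds_zero_of_lt_one hD0 hD).mul_const |y - q|

lemma abs_iterate_kernelMap_le (ha : ∀ k, 0 ≤ a k) (hsum : HasSum a 1) {x : ℝ}
    (hx : |x| ≤ 1) (n : ℕ) : |(kernelMap a)^[n] x| ≤ (kernelMap a)^[n] |x| := by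
  induction n with
  | zero => rfl
  | succ n ih =>
    have hmem := (mapsTo_kernelMap_Icc ha hsum).iterate n ⟨abs_nonneg x, hx⟩
    rw [iterate_succ_apply', iterate_succ_apply']
    exact (abs_kernelMap_le ha hsum.summable (ih.trans hmem.2)).trans
      (kernelMap_monotoneOn ha hsum.summable ⟨abs_nonneg _, ih.trans hmem.2⟩ hmem ih)

lemma tendsto_iterate_kernelMap_of_le (ha : ∀ k, 0 ≤ a k) (hsum : HasSum a 1) {K : ℕ}
    (hK : 2 ≤ K) (haK : 0 < a K) {q t : ℝ} (hq0 : 0 ≤ q) (hfix : kernelMap a q = q)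
    (hqt : q ≤ t) (ht1 : t < 1) : Tendsto (fun n => (kernelMap a)^[n] t) atTop (𝓝 q) := by
  have hstep : ∀ s ∈ Ico q 1, q ≤ kernelMap a s ∧ kernelMap a s ≤ s := fun s hs =>
    ⟨hfix ▸ kernelMap_monotoneOn ha hsum.summable ⟨hq0, by linarith [hs.2]⟩
        ⟨hq0.trans hs.1, hs.2.le⟩ hs.1,
      hs.1.eq_or_lt.elim (fun h => (h ▸ hfix).le)
        fun h => (kernelMap_lt_self ha hsum hK haK hq0 hfix h hs.2).le⟩
  have hmaps : MapsTo (kernelMap a) (Ico q 1) (Ico q 1) := fun s hs =>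
    ⟨(hstep s hs).1, (hstep s hs).2.trans_lt hs.2⟩
  have hmem : ∀ n, (kernelMap a)^[n] t ∈ Ico q 1 := fun n => hmaps.iterate n ⟨hqt, ht1⟩
  have hanti : Antitone fun n => (kernelMap a)^[n] t := antitone_nat_of_succ_le fun n => by
    rw [iterate_succ_apply']; exact (hstep _ (hmem n)).2
  have hlim := tendsto_atTop_ciInf hanti ⟨q, by rintro _ ⟨n, rfl⟩; exact (hmem n).1⟩
  set L := ⨅ n, (kernelMap a)^[n] t
  have hqL : q ≤ L := le_ciInf fun n => (hmem n).1
  have hLt : L ≤ t := ciInf_le ⟨q, by rintro _ ⟨n, rfl⟩; exact (hmem n).1⟩ 0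
  have hfixL : kernelMap a L = L := isFixedPt_of_tendsto_iterate hlim
    (continuousAt_kernelMap hsum.summable ⟨by linarith, by linarith⟩)
  obtain rfl | hqL := hqL.eq_or_lt
  · exact hlim
  · exact absurd hfixL (kernelMap_lt_self ha hsum hK haK hq0 hfix hqL (by linarith)).ne

lemma tendsto_iterate_kernelMap_of_isFixedPt (ha : ∀ k, 0 ≤ a k) (hsum : HasSum a 1) {K : ℕ}
    (hK : 2 ≤ K) (haK : 0 < a K) {q : ℝ} (hq0 : 0 ≤ q) (hq1 : q < 1)
    (hfix : kernelMap a q = q) {x : ℝ} (hx : x ∈ Ioo (-1) 1) :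
    Tendsto (fun n => (kernelMap a)^[n] x) atTop (𝓝 q) := by
  obtain ⟨r, hqr, hr1, hD⟩ := exists_gt_kernelDeriv_lt_one ha hsum hK haK hq0 hq1 hfix
  have hx1 : |x| < 1 := abs_lt.2 hx
  obtain ⟨N, hN⟩ : ∃ N, |(kernelMap a)^[N] x| ≤ r := by
    by_cases hxr : |x| ≤ r
    · exact ⟨0, hxr⟩
    obtain ⟨N, hN⟩ := ((tendsto_iterate_kernelMap_of_le ha hsum hK haK hq0 hfix
      (by linarith) hx1).eventually (eventually_lt_nhds hqr)).exists
    exact ⟨N, (abs_iterate_kernelMap_le ha hsum hx1.le N).trans hN.le⟩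
  rw [← tendsto_add_atTop_iff_nat N]
  simpa only [iterate_add_apply] using
    tendsto_iterate_kernelMap_of_abs_le ha hsum hq0 hqr.le hr1 hfix hD hN

lemma lt_kernelMap_of_forall_ne (ha : ∀ k, 0 ≤ a k) (hsum : HasSum a 1)
    (hfp : ∀ q ∈ Ico (0 : ℝ) 1, kernelMap a q ≠ q) {s : ℝ} (hs : s ∈ Ioo (-1) 1) :
    s < kernelMap a s := by
  have ha0 : 0 < a 0 := (ha 0).lt_of_ne fun h =>
    hfp 0 ⟨le_rfl, zero_lt_one⟩ (by rw [kernelMap_zero, h])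
  rcases lt_or_ge s 0 with hs0 | hs0
  · nlinarith [le_kernelMap_of_nonpos ha hsum hs.1.le hs0.le]
  by_contra! hle
  have hcont : ContinuousOn (fun x => kernelMap a x - x) (Icc 0 s) :=
    ((continuousOn_kernelMap hsum.summable).mono
      (Icc_subset_Icc (by norm_num) hs.2.le)).sub continuousOn_id
  have hzero : (0 : ℝ) ∈ Icc (kernelMap a s - s) (kernelMap a 0 - 0) :=
    ⟨by linarith, by rw [kernelMap_zero]; linarith⟩
  obtain ⟨z, hz, hfz⟩ := intermediate_value_Icc' hs0 hcont hzero
  exact hfp z ⟨hz.1, hz.2.trans_lt hs.2⟩ (sub_eq_zero.1 hfz)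

lemma tendsto_iterate_kernelMap_of_forall_ne (ha : ∀ k, 0 ≤ a k) (hsum : HasSum a 1) {K : ℕ}
    (hK : K ≠ 0) (haK : 0 < a K) (hfp : ∀ q ∈ Ico (0 : ℝ) 1, kernelMap a q ≠ q) {x : ℝ}
    (hx : x ∈ Ioo (-1) 1) : Tendsto (fun n => (kernelMap a)^[n] x) atTop (𝓝 1) := by
  have hmem : ∀ n, (kernelMap a)^[n] x ∈ Ioo (-1) 1 :=
    fun n => (mapsTo_kernelMap_Ioo ha hsum hK haK).iterate n hx
  have hmono : Monotone fun n => (kernelMap a)^[n] x := monotone_nat_of_le_succ fun n => by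
    rw [iterate_succ_apply']; exact (lt_kernelMap_of_forall_ne ha hsum hfp (hmem n)).le
  have hbdd : BddAbove (range fun n => (kernelMap a)^[n] x) :=
    ⟨1, by rintro _ ⟨n, rfl⟩; exact (hmem n).2.le⟩
  have hlim := tendsto_atTop_ciSup hmono hbdd
  set L := ⨆ n, (kernelMap a)^[n] x
  have hxL : x ≤ L := le_ciSup hbdd 0
  obtain hL1 | hL1 := (ciSup_le fun n => (hmem n).2.le : L ≤ 1).lt_or_eq
  · have hL : L ∈ Ioo (-1) 1 := ⟨by linarith [hx.1], hL1⟩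
    exact absurd (isFixedPt_of_tendsto_iterate hlim (continuousAt_kernelMap hsum.summable hL))
      (lt_kernelMap_of_forall_ne ha hsum hfp hL).ne'
  · rwa [← hL1]

theorem kernel_global_convergence
    (a : ℕ → ℝ) (ha : ∀ k, 0 ≤ a k) (hsum : HasSum a 1)
    (hnl : ∃ k, 2 ≤ k ∧ 0 < a k) :
    ∃! ρs : ℝ, ρs ∈ Set.Icc (0 : ℝ) 1 ∧ kernelMap a ρs = ρs ∧
      ∀ ρ0 ∈ Set.Ioo (-1 : ℝ) 1, ∀ ρ : ℕ → ℝ, ρ 0 = ρ0 →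
        (∀ ℓ, ρ (ℓ + 1) = kernelMap a (ρ ℓ)) →
        Tendsto ρ atTop (nhds ρs) := by
  obtain ⟨K, hK, haK⟩ := hnl
  obtain ⟨q, hq, hfix, hconv⟩ : ∃ q ∈ Icc (0 : ℝ) 1, kernelMap a q = q ∧
      ∀ x ∈ Ioo (-1 : ℝ) 1, Tendsto (fun n => (kernelMap a)^[n] x) atTop (𝓝 q) := by
    by_cases h : ∃ q ∈ Ico (0 : ℝ) 1, kernelMap a q = q
    · obtain ⟨q, hq, hfix⟩ := h
      exact ⟨q, Ico_subset_Icc_self hq, hfix,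
        fun x hx => tendsto_iterate_kernelMap_of_isFixedPt ha hsum hK haK hq.1 hq.2 hfix hx⟩
    · push Not at h
      exact ⟨1, right_mem_Icc.2 zero_le_one, kernelMap_one hsum,
        fun x hx => tendsto_iterate_kernelMap_of_forall_ne ha hsum (by omega) haK h hx⟩
  have h0 : (0 : ℝ) ∈ Ioo (-1) 1 := by norm_num
  refine ⟨q, ⟨hq, hfix, fun ρ0 hρ0 ρ hρ0' hρ => ?_⟩, fun p hp => ?_⟩
  · have horbit : ρ = fun n => (kernelMap a)^[n] ρ0 := funext fun n => by
      induction n with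
      | zero => exact hρ0'
      | succ n ih => rw [hρ, ih, iterate_succ_apply']
    exact horbit ▸ hconv ρ0 hρ0
  · exact tendsto_nhds_unique (hp.2.2 0 h0 _ rfl fun n => iterate_succ_apply' _ n 0) (hconv 0 h0)
end

section
/- (Mehler's lemma.) For all natural numbers m and n, E[he_m(X) · he_n(Y)] = ρ^n if m = n, and E[he_m(X) · he_n(Y)] = 0 if m ≠ n. -/
open MeasureTheory ProbabilityTheory

/-- The normalized (probabilists') Hermite polynomial `he_k(x) = hermite_k(x) / √(k!)`. -/
noncomputable def normalizedHermite (k : ℕ) (x : ℝ) : ℝ :=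
  Polynomial.aeval x (Polynomial.hermite k) / Real.sqrt (Nat.factorial k)

/-!
Gaussian integration by parts (Stein's identity `E[(Z - μ) p(Z)] = v E[p'(Z)]`), combined with
`He_{n+2} = X He_{n+1} - (n+1) He_n` and `He_{n+1}' = (n+1) He_n`, shows that for `c² + s² = 1`
the Hermite polynomials are eigenfunctions of the Ornstein–Uhlenbeck operator,
`E_Z[He_n(c x + s Z)] = c^n He_n(x)`, and that `E[He_m He_n] = n! δ_{mn}`. Integrating out `Z`
first (Fubini) then gives `E[He_m(X) He_n(cX + sZ)] = c^n E[He_m(X) He_n(X)]`. Fubini applies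
because `cX + sZ` is again standard Gaussian, so both factors are in `L²`.
-/

open Polynomial
open scoped NNReal Nat

namespace Polynomial

theorem derivative_hermite_succ (n : ℕ) :
    derivative (hermite (n + 1)) = (n + 1 : ℤ[X]) * hermite n := by
  induction n with
  | zero => simp
  | succ n ih =>
    rw [hermite_succ (n + 1), derivative_sub, derivative_mul, derivative_X, one_mul, ih,
      derivative_mul, hermite_succ n]
    simp only [derivative_add, derivative_natCast, derivative_one]
    push_cast
    ring

theorem hermite_add_two (n : ℕ) :
    hermite (n + 2) = X * hermite (n + 1) - (n + 1 : ℤ[X]) * hermite n := by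
  rw [hermite_succ (n + 1), derivative_hermite_succ]

end Polynomial

noncomputable def realHermite (n : ℕ) : ℝ[X] := (hermite n).map (Int.castRingHom ℝ)

theorem eval_realHermite (n : ℕ) (x : ℝ) : (realHermite n).eval x = aeval x (hermite n) := by
  rw [realHermite, eval_map, aeval_def]
  rfl

@[simp] theorem realHermite_zero : realHermite 0 = 1 := by simp [realHermite]

@[simp] theorem realHermite_one : realHermite 1 = X := by simp [realHermite]

theorem derivative_realHermite_succ (n : ℕ) :
    derivative (realHermite (n + 1)) = ((n : ℝ) + 1) • realHermite n := by
  rw [realHermite, derivative_map, derivative_hermite_succ, Polynomial.map_mul, smul_eq_C_mul]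
  simp [realHermite]

theorem realHermite_add_two (n : ℕ) :
    realHermite (n + 2) = X * realHermite (n + 1) - ((n : ℝ) + 1) • realHermite n := by
  rw [realHermite, hermite_add_two, smul_eq_C_mul]
  simp [realHermite]

theorem realHermite_succ (n : ℕ) :
    realHermite (n + 1) = X * realHermite n - derivative (realHermite n) := by
  rw [realHermite, hermite_succ]
  simp [realHermite, derivative_map]

theorem integrable_eval_gaussianReal (μ : ℝ) (v : ℝ≥0) (p : ℝ[X]) :
    Integrable (fun x ↦ p.eval x) (gaussianReal μ v) := by
  induction p using Polynomial.induction_on' with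
  | add p q hp hq => simp only [eval_add]; exact hp.add hq
  | monomial n a =>
    have h0 : (0 : ℝ) ∈ interior (integrableExpSet id (gaussianReal μ v)) := by
      simp [integrableExpSet_id_gaussianReal]
    simpa using (integrable_pow_of_mem_interior_integrableExpSet h0 n).const_mul a

theorem hasDerivAt_gaussianPDFReal (μ : ℝ) (v : ℝ≥0) (x : ℝ) :
    HasDerivAt (gaussianPDFReal μ v) (-((x - μ) / v) * gaussianPDFReal μ v x) x := by
  have hexponent : HasDerivAt (fun y ↦ -(y - μ) ^ 2 / (2 * v)) (-((x - μ) / v)) x :=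
    ((((hasDerivAt_id' x).sub_const μ).fun_pow 2).fun_neg.div_const _).congr_deriv (by ring)
  rw [gaussianPDFReal_def]
  exact (hexponent.exp.const_mul _).congr_deriv (by ring)

theorem integrable_gaussianReal_iff {μ : ℝ} {v : ℝ≥0} (hv : v ≠ 0) {f : ℝ → ℝ} :
    Integrable f (gaussianReal μ v) ↔ Integrable (fun x ↦ gaussianPDFReal μ v x * f x) := by
  rw [gaussianReal_of_var_ne_zero μ hv, integrable_withDensity_iff_integrable_smul'
    (measurable_gaussianPDF μ v) (ae_of_all _ fun _ ↦ gaussianPDF_lt_top)]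
  simp [toReal_gaussianPDF]

theorem integrable_eval_mul_gaussianPDFReal (μ : ℝ) {v : ℝ≥0} (hv : v ≠ 0) (p : ℝ[X]) :
    Integrable (fun x ↦ p.eval x * gaussianPDFReal μ v x) := by
  simpa only [mul_comm] using
    (integrable_gaussianReal_iff hv).mp (integrable_eval_gaussianReal μ v p)

theorem integral_sub_mul_eval_gaussianReal (μ : ℝ) (v : ℝ≥0) (p : ℝ[X]) :
    ∫ x, (x - μ) * p.eval x ∂gaussianReal μ v =
      v * ∫ x, (derivative p).eval x ∂gaussianReal μ v := by
  rcases eq_or_ne v 0 with rfl | hv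
  · simp [gaussianReal_zero_var]
  have hparts := integral_mul_deriv_eq_deriv_mul_of_integrable
    (u := fun x ↦ p.eval x) (v := gaussianPDFReal μ v)
    (fun x _ ↦ p.hasDerivAt x) (fun x _ ↦ hasDerivAt_gaussianPDFReal μ v x)
    ((integrable_eval_mul_gaussianPDFReal μ hv (p * (C (-(v : ℝ)⁻¹) * (X - C μ)))).congr
      (ae_of_all _ fun x ↦ by simp only [eval_mul, eval_C, eval_sub, eval_X, Pi.mul_apply]; ring))
    (integrable_eval_mul_gaussianPDFReal μ hv (derivative p))
    (integrable_eval_mul_gaussianPDFReal μ hv p)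
  simp only [integral_gaussianReal_eq_integral_smul hv, smul_eq_mul]
  calc ∫ x, gaussianPDFReal μ v x * ((x - μ) * p.eval x)
      = -v * ∫ x, p.eval x * (-((x - μ) / v) * gaussianPDFReal μ v x) := by
        rw [← integral_const_mul]
        congr 1 with x
        field_simp
    _ = v * ∫ x, gaussianPDFReal μ v x * (derivative p).eval x := by
        rw [hparts]
        simp only [mul_comm (gaussianPDFReal μ v _)]
        ring

noncomputable def gaussianExpectation : ℝ[X] →ₗ[ℝ] ℝ where
  toFun p := ∫ x, p.eval x ∂gaussianReal 0 1
  map_add' p q := by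
    simp only [eval_add]
    exact integral_add (integrable_eval_gaussianReal 0 1 p) (integrable_eval_gaussianReal 0 1 q)
  map_smul' a p := by
    simp only [eval_smul, smul_eq_mul, RingHom.id_apply]
    exact integral_const_mul a _

theorem gaussianExpectation_apply (p : ℝ[X]) :
    gaussianExpectation p = ∫ x, p.eval x ∂gaussianReal 0 1 := rfl

theorem gaussianExpectation_X_mul (p : ℝ[X]) :
    gaussianExpectation (X * p) = gaussianExpectation (derivative p) := by
  simpa [gaussianExpectation_apply] using integral_sub_mul_eval_gaussianReal 0 1 p

theorem gaussianExpectation_C (a : ℝ) : gaussianExpectation (C a) = a := by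
  simp [gaussianExpectation_apply]

theorem gaussianExpectation_X : gaussianExpectation X = 0 := by
  simpa using gaussianExpectation_X_mul 1

theorem gaussianExpectation_realHermite_comp {c s : ℝ} (hcs : c ^ 2 + s ^ 2 = 1) (x : ℝ)
    (n : ℕ) :
    gaussianExpectation ((realHermite n).comp (C (c * x) + C s * X)) =
      c ^ n * (realHermite n).eval x := by
  set u : ℝ[X] := C (c * x) + C s * X
  induction n using Nat.twoStepInduction with
  | zero => simpa using gaussianExpectation_C 1
  | one =>
    rw [realHermite_one, X_comp, map_add, ← smul_eq_C_mul, map_smul, gaussianExpectation_C,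
      gaussianExpectation_X]
    simp
  | more n ih₀ ih₁ =>
    have hcomp : (realHermite (n + 2)).comp u = (c * x) • (realHermite (n + 1)).comp u +
        s • (X * (realHermite (n + 1)).comp u) - ((n : ℝ) + 1) • (realHermite n).comp u := by
      rw [realHermite_add_two]
      simp only [u, sub_comp, mul_comp, X_comp, C_comp, smul_eq_C_mul]
      ring
    have hderiv :
        derivative ((realHermite (n + 1)).comp u) = (s * (n + 1)) • (realHermite n).comp u := by
      rw [derivative_comp, derivative_realHermite_succ]
      simp only [u, mul_comp, C_comp, derivative_add, derivative_C, derivative_mul, derivative_X,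
        smul_eq_C_mul, map_mul]
      ring
    -- Stein turns `E[Z He_{n+1}(u)]` into `s (n+1) E[He_n(u)]`, and `s² - 1 = -c²`.
    rw [hcomp, map_sub, map_add, map_smul, map_smul, map_smul, gaussianExpectation_X_mul, hderiv,
      map_smul, ih₀, ih₁, realHermite_add_two]
    simp only [smul_eq_mul, eval_sub, eval_mul, eval_X, eval_smul]
    linear_combination ((n + 1) * c ^ n * (realHermite n).eval x) * hcs

theorem gaussianExpectation_realHermite_mul_realHermite (m n : ℕ) :
    gaussianExpectation (realHermite m * realHermite n) = if m = n then (n ! : ℝ) else 0 := by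
  induction m generalizing n with
  | zero =>
    have h := gaussianExpectation_realHermite_comp (c := 0) (s := 1) (by norm_num) 0 n
    cases n <;> simp_all
  | succ m ih =>
    have hparts : gaussianExpectation (realHermite (m + 1) * realHermite n) =
        gaussianExpectation (realHermite m * derivative (realHermite n)) := by
      rw [realHermite_succ, sub_mul, map_sub, mul_assoc, gaussianExpectation_X_mul,
        derivative_mul, map_add, add_sub_cancel_left]
    rw [hparts]
    cases n with
    | zero => simp
    | succ k =>
      rw [derivative_realHermite_succ, mul_smul_comm, map_smul, ih, smul_eq_mul]
      split_ifs <;> simp_all [Nat.factorial_succ]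

theorem gaussianReal_prod_map_linear (μ₁ μ₂ a b : ℝ) (v₁ v₂ : ℝ≥0) :
    ((gaussianReal μ₁ v₁).prod (gaussianReal μ₂ v₂)).map (fun ω ↦ a * ω.1 + b * ω.2) =
      gaussianReal (a * μ₁ + b * μ₂)
        (.mk (a ^ 2) (sq_nonneg _) * v₁ + .mk (b ^ 2) (sq_nonneg _) * v₂) := by
  have hfst : ((gaussianReal μ₁ v₁).prod (gaussianReal μ₂ v₂)).map (fun ω ↦ a * ω.1) =
      gaussianReal (a * μ₁) (.mk (a ^ 2) (sq_nonneg _) * v₁) := calc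
    _ = (((gaussianReal μ₁ v₁).prod (gaussianReal μ₂ v₂)).map Prod.fst).map (a * ·) :=
      (Measure.map_map (measurable_const_mul a) measurable_fst).symm
    _ = _ := by rw [Measure.map_fst_prod, measure_univ, one_smul, gaussianReal_map_const_mul]
  have hsnd : ((gaussianReal μ₁ v₁).prod (gaussianReal μ₂ v₂)).map (fun ω ↦ b * ω.2) =
      gaussianReal (b * μ₂) (.mk (b ^ 2) (sq_nonneg _) * v₂) := calc
    _ = (((gaussianReal μ₁ v₁).prod (gaussianReal μ₂ v₂)).map Prod.snd).map (b * ·) :=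
      (Measure.map_map (measurable_const_mul b) measurable_snd).symm
    _ = _ := by rw [Measure.map_snd_prod, measure_univ, one_smul, gaussianReal_map_const_mul]
  exact gaussianReal_add_gaussianReal_of_indepFun
    (indepFun_prod (measurable_const_mul a) (measurable_const_mul b)) hfst hsnd

theorem measurePreserving_linear_prod_gaussianReal {c s : ℝ} (hcs : c ^ 2 + s ^ 2 = 1) :
    MeasurePreserving (fun ω : ℝ × ℝ ↦ c * ω.1 + s * ω.2)
      ((gaussianReal 0 1).prod (gaussianReal 0 1)) (gaussianReal 0 1) where
  measurable := by fun_prop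
  map_eq := by
    rw [gaussianReal_prod_map_linear]
    congr
    · simp
    · ext; simpa using hcs

theorem memLp_two_eval_gaussianReal (μ : ℝ) (v : ℝ≥0) (p : ℝ[X]) :
    MemLp (fun x ↦ p.eval x) 2 (gaussianReal μ v) :=
  (memLp_two_iff_integrable_sq p.continuous.aestronglyMeasurable).mpr
    (by simpa only [eval_pow] using integrable_eval_gaussianReal μ v (p ^ (2 : ℕ)))

theorem integrable_eval_mul_eval_linear {c s : ℝ} (hcs : c ^ 2 + s ^ 2 = 1) (p q : ℝ[X]) :
    Integrable (fun ω : ℝ × ℝ ↦ p.eval ω.1 * q.eval (c * ω.1 + s * ω.2))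
      ((gaussianReal 0 1).prod (gaussianReal 0 1)) :=
  MemLp.integrable_mul
    ((memLp_two_eval_gaussianReal 0 1 p).comp_measurePreserving measurePreserving_fst)
    ((memLp_two_eval_gaussianReal 0 1 q).comp_measurePreserving
      (measurePreserving_linear_prod_gaussianReal hcs))

theorem integral_eval_realHermite_mul_eval_realHermite_linear {c s : ℝ} (hcs : c ^ 2 + s ^ 2 = 1)
    (m n : ℕ) :
    ∫ ω, (realHermite m).eval ω.1 * (realHermite n).eval (c * ω.1 + s * ω.2)
        ∂(gaussianReal 0 1).prod (gaussianReal 0 1) =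
      c ^ n * if m = n then (n ! : ℝ) else 0 := by
  have hinner (x : ℝ) : ∫ z, (realHermite m).eval x * (realHermite n).eval (c * x + s * z)
      ∂gaussianReal 0 1 = c ^ n * (realHermite m * realHermite n).eval x := by
    have h := gaussianExpectation_realHermite_comp hcs x n
    simp only [gaussianExpectation_apply, eval_comp, eval_add, eval_mul, eval_C, eval_X] at h
    rw [integral_const_mul, h, eval_mul]
    ring
  rw [integral_prod _ (integrable_eval_mul_eval_linear hcs _ _)]
  simp only [hinner]
  rw [integral_const_mul, ← gaussianExpectation_apply,
    gaussianExpectation_realHermite_mul_realHermite]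

/-- Mehler's lemma: for a bivariate standard Gaussian pair `(X, Y)` with correlation `ρ`,
`E[he_m(X) he_n(Y)] = ρ^n δ_{mn}`. Here `X ω = ω.1`, `Z ω = ω.2` are independent standard
Gaussians and `Y = ρ X + √(1-ρ²) Z`. -/
theorem mehler_lemma (ρ : ℝ) (hρ : ρ ∈ Set.Icc (-1 : ℝ) 1) (m n : ℕ) :
    (∫ ω : ℝ × ℝ,
        normalizedHermite m ω.1 *
          normalizedHermite n (ρ * ω.1 + Real.sqrt (1 - ρ ^ 2) * ω.2)
        ∂((gaussianReal 0 1).prod (gaussianReal 0 1))) =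
    if m = n then ρ ^ n else 0 := by
  have hcs : ρ ^ 2 + Real.sqrt (1 - ρ ^ 2) ^ 2 = 1 := by
    rw [Real.sq_sqrt (by nlinarith [hρ.1, hρ.2])]
    ring
  simp_rw [normalizedHermite, div_mul_div_comm, integral_div, ← eval_realHermite,
    integral_eval_realHermite_mul_eval_realHermite_linear hcs]
  split_ifs with hmn
  · subst hmn
    rw [Real.mul_self_sqrt (by positivity), mul_div_cancel_right₀ _ (by positivity)]
  · simp
end

section
/- (Centered case, exponential convergence to 0.) Let κ be a nonlinear kernel map with a_0 = 0, and let (ρ_ℓ) be the kernel sequence started from ρ_0 ∈ (-1,1). Then a_1 < 1, every ρ_ℓ lies in (-1,1), and with α := 1/(2 - a_1) < 1 one has |ρ_ℓ|/(1 - |ρ_ℓ|) ≤ (|ρ_0|/(1 - |ρ_0|)) · α^ℓ for all ℓ. -/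
lemma kernel_abs_bound (a : ℕ → ℝ) (ha : ∀ k, 0 ≤ a k) (hsum : HasSum a 1)
    (h0 : a 0 = 0) (ρ : ℝ) (hρ : |ρ| ≤ 1) :
    |kernelMap a ρ| ≤ a 1 * |ρ| + (1 - a 1) * |ρ| ^ 2 := by
  have hS := hsum.summable
  have hr0 : 0 ≤ |ρ| := abs_nonneg ρ
  have habs : ∀ k, |a k * ρ ^ k| = a k * |ρ| ^ k := fun k => by
    rw [abs_mul, abs_of_nonneg (ha k), abs_pow]
  have hb : ∀ k, a k * |ρ| ^ k ≤ a k := fun k => by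
    calc a k * |ρ| ^ k ≤ a k * 1 :=
          mul_le_mul_of_nonneg_left (pow_le_one₀ hr0 hρ) (ha k)
      _ = a k := mul_one _
  have hsum1 : Summable (fun k => a k * |ρ| ^ k) :=
    Summable.of_nonneg_of_le (fun k => mul_nonneg (ha k) (pow_nonneg hr0 k)) hb hS
  have hsum2 : Summable (fun k => a k * ρ ^ k) := by
    apply Summable.of_norm
    simpa only [Real.norm_eq_abs, habs] using hsum1
  set h : ℕ → ℝ := fun k => if k = 1 then a 1 * |ρ| else a k * |ρ| ^ 2 with hh
  have hhle : ∀ k, h k ≤ a k := by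
    intro k
    by_cases hk : k = 1
    · simp only [hh, hk, if_pos]
      calc a 1 * |ρ| ≤ a 1 * 1 := mul_le_mul_of_nonneg_left hρ (ha 1)
        _ = a 1 := mul_one _
    · simp only [hh, hk, if_neg, if_false]
      calc a k * |ρ| ^ 2 ≤ a k * 1 :=
            mul_le_mul_of_nonneg_left (pow_le_one₀ hr0 hρ) (ha k)
        _ = a k := mul_one _
  have hhnn : ∀ k, 0 ≤ h k := by
    intro k
    by_cases hk : k = 1
    · simp only [hh, hk, if_pos]
      exact mul_nonneg (ha 1) hr0
    · simp only [hh, hk, if_neg, if_false]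
      exact mul_nonneg (ha k) (pow_nonneg hr0 2)
  have hhsum : Summable h := Summable.of_nonneg_of_le hhnn hhle hS
  have hfle : ∀ k, a k * |ρ| ^ k ≤ h k := by
    intro k
    match k with
    | 0 => simp [hh, h0]
    | 1 => simp [hh]
    | (n+2) =>
      simp only [hh, if_neg (by omega : ¬ n + 2 = 1)]
      exact mul_le_mul_of_nonneg_left
        (pow_le_pow_of_le_one hr0 hρ (by omega)) (ha _)
  have hsumh : ∑' k, h k = a 1 * |ρ| + (1 - a 1) * |ρ| ^ 2 := by
    have e1 : ∑' k, h k = h 1 + ∑' k, if k = 1 then 0 else h k :=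
      Summable.tsum_eq_add_tsum_ite hhsum 1
    have e2 : (fun k => if k = 1 then (0:ℝ) else h k)
        = fun k => (if k = 1 then 0 else a k) * |ρ| ^ 2 := by
      funext k; by_cases hk : k = 1 <;> simp [hh, hk]
    have e4 : ∑' k, (if k = 1 then (0:ℝ) else a k) = 1 - a 1 := by
      have e5 := Summable.tsum_eq_add_tsum_ite hS 1
      rw [hsum.tsum_eq] at e5
      linarith
    rw [e1, e2, tsum_mul_right, e4]
    simp [hh]
  have hnormsum : Summable (fun k => ‖a k * ρ ^ k‖) := by
    simpa only [Real.norm_eq_abs, habs] using hsum1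
  have h1 : ‖∑' k, a k * ρ ^ k‖ ≤ ∑' k, ‖a k * ρ ^ k‖ := norm_tsum_le_tsum_norm hnormsum
  have h2 : ∑' k, ‖a k * ρ ^ k‖ = ∑' k, a k * |ρ| ^ k :=
    tsum_congr (fun k => by rw [Real.norm_eq_abs, habs])
  rw [kernelMap, ← Real.norm_eq_abs]
  calc ‖∑' k, a k * ρ ^ k‖ ≤ ∑' k, a k * |ρ| ^ k := by rw [← h2]; exact h1
    _ ≤ ∑' k, h k := Summable.tsum_le_tsum hfle hsum1 hhsum
    _ = a 1 * |ρ| + (1 - a 1) * |ρ| ^ 2 := hsumh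

/-- Centered case: exponential convergence of the kernel sequence to `0`. -/
theorem kernel_centered_exponential_convergence
    (a : ℕ → ℝ) (ha : ∀ k, 0 ≤ a k) (hsum : HasSum a 1)
    (hnl : ∃ k, 2 ≤ k ∧ 0 < a k) (h0 : a 0 = 0)
    (ρ : ℕ → ℝ) (hρ0 : ρ 0 ∈ Set.Ioo (-1 : ℝ) 1)
    (hrec : ∀ ℓ, ρ (ℓ + 1) = kernelMap a (ρ ℓ)) :
    a 1 < 1 ∧ 1 / (2 - a 1) < 1 ∧ (∀ ℓ, ρ ℓ ∈ Set.Ioo (-1 : ℝ) 1) ∧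
      ∀ ℓ, |ρ ℓ| / (1 - |ρ ℓ|) ≤ |ρ 0| / (1 - |ρ 0|) * (1 / (2 - a 1)) ^ ℓ := by
  obtain ⟨m, hm2, hmpos⟩ := hnl
  have hS := hsum.summable
  have ha1 : a 1 < 1 := by
    have h2 : a 1 + a m ≤ 1 := by
      have h3 := Summable.sum_le_tsum ({1, m} : Finset ℕ) (fun k _ => ha k) hS
      rw [hsum.tsum_eq] at h3
      rwa [Finset.sum_insert (by simp; omega), Finset.sum_singleton] at h3
    linarith
  have ha1n : 0 ≤ a 1 := ha 1
  have hα : 1 / (2 - a 1) < 1 := by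
    rw [div_lt_one (by linarith)]; linarith
  have hαn : 0 ≤ 1 / (2 - a 1) := div_nonneg zero_le_one (by linarith)
  -- main induction
  have main : ∀ ℓ, |ρ ℓ| < 1 ∧
      |ρ ℓ| / (1 - |ρ ℓ|) ≤ |ρ 0| / (1 - |ρ 0|) * (1 / (2 - a 1)) ^ ℓ := by
    intro ℓ
    induction ℓ with
    | zero =>
      constructor
      · exact abs_lt.2 ⟨hρ0.1, hρ0.2⟩
      · simp
    | succ n ih =>
      obtain ⟨hlt, hle⟩ := ih
      set r := |ρ n| with hr
      have hr0 : 0 ≤ r := abs_nonneg _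
      set s := |ρ (n+1)| with hs
      have hs0 : 0 ≤ s := abs_nonneg _
      have hsb : s ≤ a 1 * r + (1 - a 1) * r ^ 2 := by
        rw [hs, hrec n]
        exact kernel_abs_bound a ha hsum h0 (ρ n) (le_of_lt hlt)
      have hgr : a 1 * r + (1 - a 1) * r ^ 2 ≤ r := by
        nlinarith [mul_nonneg (mul_nonneg (show (0:ℝ) ≤ 1 - a 1 by linarith) hr0)
          (show (0:ℝ) ≤ 1 - r by linarith)]
      have hslt : s < 1 := lt_of_le_of_lt (le_trans hsb hgr) hlt
      refine ⟨hslt, ?_⟩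
      have key : s / (1 - s) ≤ r / (1 - r) * (1 / (2 - a 1)) := by
        rw [mul_one_div, div_div, div_le_div_iff₀ (by linarith) (by nlinarith)]
        nlinarith [mul_nonneg (mul_nonneg hr0 (sq_nonneg (1 - r))) (sq_nonneg (1 - a 1)),
          mul_nonneg (sub_nonneg.2 hsb) (mul_nonneg (by linarith : (0:ℝ) ≤ 1 - r)
            (by linarith : (0:ℝ) ≤ 2 - a 1))]
      calc s / (1 - s) ≤ r / (1 - r) * (1 / (2 - a 1)) := key
        _ ≤ (|ρ 0| / (1 - |ρ 0|) * (1 / (2 - a 1)) ^ n) * (1 / (2 - a 1)) :=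
            mul_le_mul_of_nonneg_right hle hαn
        _ = |ρ 0| / (1 - |ρ 0|) * (1 / (2 - a 1)) ^ (n + 1) := by ring
  refine ⟨ha1, hα, fun ℓ => ?_, fun ℓ => (main ℓ).2⟩
  have := (main ℓ).1
  rw [abs_lt] at this
  exact ⟨this.1, this.2⟩
end

section
/- (Case κ(0) > 0 and κ'(1) < 1, exponential convergence to 1.) Let κ be a kernel map with a_0 > 0 and κ'(1) = ∑_{k=1}^∞ k a_k < 1. Then for every ρ_0 ∈ (-1,1), the kernel sequence satisfies |ρ_ℓ - 1| ≤ |ρ_0 - 1| · (κ'(1))^ℓ for all ℓ. -/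
lemma abs_pow_sub_one_le {x : ℝ} (hx : |x| ≤ 1) (k : ℕ) : |x ^ k - 1| ≤ k * |x - 1| := by
  have h := abs_pow_sub_pow_le x 1 k
  rw [one_pow, abs_one, max_eq_right hx, one_pow, mul_one, mul_comm] at h
  exact h

section KernelMap

variable {a : ℕ → ℝ} (ha : ∀ k, 0 ≤ a k) {x : ℝ} (hx : |x| ≤ 1)
include ha hx

lemma norm_coeff_mul_pow_le (k : ℕ) : ‖a k * x ^ k‖ ≤ a k := by
  rw [norm_mul, norm_pow, Real.norm_of_nonneg (ha k)]
  exact mul_le_of_le_one_right (ha k) (pow_le_one₀ (norm_nonneg x) hx)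

lemma abs_kernelMap_le_s5 {s : ℝ} (hsum : HasSum a s) : |kernelMap a x| ≤ s :=
  tsum_of_norm_bounded hsum (norm_coeff_mul_pow_le ha hx)

lemma abs_kernelMap_sub_one_le (hsum : HasSum a 1)
    (hd : Summable fun k : ℕ => (k : ℝ) * a k) :
    |kernelMap a x - 1| ≤ (∑' k : ℕ, (k : ℝ) * a k) * |x - 1| := by
  have hsummable : Summable fun k => a k * x ^ k :=
    .of_norm_bounded hsum.summable (norm_coeff_mul_pow_le ha hx)
  have hdiff : HasSum (fun k => a k * (x ^ k - 1)) (kernelMap a x - 1) := by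
    simpa only [kernelMap, mul_sub, mul_one] using hsummable.hasSum.sub hsum
  rw [← hdiff.tsum_eq, ← Real.norm_eq_abs]
  refine tsum_of_norm_bounded (hd.hasSum.mul_right |x - 1|) fun k => ?_
  rw [Real.norm_eq_abs, abs_mul, abs_of_nonneg (ha k), mul_comm _ (a k), mul_assoc]
  exact mul_le_mul_of_nonneg_left (abs_pow_sub_one_le hx k) (ha k)

end KernelMap

theorem kernel_convergence_to_one_exponential_general
    (a : ℕ → ℝ) (ha : ∀ k, 0 ≤ a k) (hsum : HasSum a 1)
    (hd : Summable fun k : ℕ => (k : ℝ) * a k)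
    (ρ : ℕ → ℝ) (hρ0 : ρ 0 ∈ Set.Ioo (-1 : ℝ) 1)
    (hrec : ∀ ℓ, ρ (ℓ + 1) = kernelMap a (ρ ℓ)) :
    ∀ ℓ, |ρ ℓ - 1| ≤ |ρ 0 - 1| * (∑' k : ℕ, (k : ℝ) * a k) ^ ℓ := by
  set c := ∑' k : ℕ, (k : ℝ) * a k
  have hbounded : ∀ ℓ, |ρ ℓ| ≤ 1 := by
    intro ℓ
    induction ℓ with
    | zero => exact abs_le.mpr ⟨hρ0.1.le, hρ0.2.le⟩
    | succ n ih => exact hrec n ▸ abs_kernelMap_le_s5 ha ih hsum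
  have hc : 0 ≤ c := tsum_nonneg fun k => mul_nonneg k.cast_nonneg (ha k)
  intro ℓ
  induction ℓ with
  | zero => simp
  | succ n ih =>
    calc |ρ (n + 1) - 1| ≤ c * |ρ n - 1| :=
          hrec n ▸ abs_kernelMap_sub_one_le ha (hbounded n) hsum hd
      _ ≤ c * (|ρ 0 - 1| * c ^ n) := by gcongr
      _ = |ρ 0 - 1| * c ^ (n + 1) := by ring

/-- Case `κ(0) > 0` and `κ'(1) < 1`: exponential convergence of the kernel sequence to `1`,
where `κ'(1) = ∑ k a_k`. -/
theorem kernel_convergence_to_one_exponential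
    (a : ℕ → ℝ) (ha : ∀ k, 0 ≤ a k) (hsum : HasSum a 1)
    (h0 : 0 < a 0)
    (hd : Summable fun k : ℕ => (k : ℝ) * a k)
    (hd1 : (∑' k : ℕ, (k : ℝ) * a k) < 1)
    (ρ : ℕ → ℝ) (hρ0 : ρ 0 ∈ Set.Ioo (-1 : ℝ) 1)
    (hrec : ∀ ℓ, ρ (ℓ + 1) = kernelMap a (ρ ℓ)) :
    ∀ ℓ, |ρ ℓ - 1| ≤ |ρ 0 - 1| * (∑' k : ℕ, (k : ℝ) * a k) ^ ℓ :=
  kernel_convergence_to_one_exponential_general a ha hsum hd ρ hρ0 hrec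
end

section
/- (Case κ(0) > 0 and κ'(1) = 1, polynomial convergence to 1.) Let κ be a nonlinear kernel map with a_0 > 0 and ∑_{k=1}^∞ k a_k = 1. Set α := 1 - a_0 - a_1, which is positive. Then for every ρ_0 ∈ (-1,1), the kernel sequence satisfies |ρ_ℓ - 1| ≤ |ρ_0 - 1| / (ℓ · α · |ρ_0 - 1| + 1) for all ℓ. -/
lemma sq_one_sub_le_nat_mul_one_sub_sub_one_sub_pow {x : ℝ} (hx : |x| ≤ 1) {k : ℕ}
    (hk : 2 ≤ k) : (1 - x) ^ 2 ≤ k * (1 - x) - (1 - x ^ k) := by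
  induction k, hk using Nat.le_induction with
  | base => exact le_of_eq (by push_cast; ring)
  | succ k _ ih =>
    have hx1 : x ≤ 1 := (le_abs_self x).trans hx
    have hxk : x ^ k ≤ 1 :=
      (le_abs_self _).trans (abs_pow x k ▸ pow_le_one₀ (abs_nonneg x) hx)
    push_cast
    rw [pow_succ x k]
    nlinarith [mul_nonneg (sub_nonneg.2 hx1) (sub_nonneg.2 hxk)]

lemma HasSum.nat_add_two {a : ℕ → ℝ} {s : ℝ} (hs : HasSum a s) :
    HasSum (fun n => a (n + 2)) (s - a 0 - a 1) := by
  simpa [Finset.sum_range_succ, sub_sub] using (hasSum_nat_add_iff' 2).2 hs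

lemma monotoneOn_div_mul_add_one {α : ℝ} (hα : 0 ≤ α) :
    MonotoneOn (fun x : ℝ => x / (α * x + 1)) (Set.Ici 0) := by
  intro x hx y hy hxy
  simp only [Set.mem_Ici] at hx hy
  rw [div_le_div_iff₀ (by positivity) (by positivity)]
  nlinarith

lemma sub_mul_sq_le_div_mul_add_one {α x : ℝ} (hα : 0 ≤ α) (hx : 0 ≤ x) :
    x - α * x ^ 2 ≤ x / (α * x + 1) := by
  rw [le_div_iff₀ (by positivity)]
  nlinarith [pow_nonneg hx 3, sq_nonneg α]

lemma le_div_nat_mul_add_one_of_le_div_mul_add_one {α : ℝ} {u : ℕ → ℝ} (hα : 0 ≤ α)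
    (hu : ∀ n, 0 ≤ u n) (hstep : ∀ n, u (n + 1) ≤ u n / (α * u n + 1)) (n : ℕ) :
    u n ≤ u 0 / (n * α * u 0 + 1) := by
  induction n with
  | zero => simp
  | succ n ih =>
    have h0 := hu 0
    calc u (n + 1) ≤ u n / (α * u n + 1) := hstep n
      _ ≤ u 0 / (n * α * u 0 + 1) / (α * (u 0 / (n * α * u 0 + 1)) + 1) :=
        monotoneOn_div_mul_add_one hα (hu n) (by positivity : (0 : ℝ) ≤ _) ih
      _ = u 0 / ((n + 1 : ℕ) * α * u 0 + 1) := by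
        push_cast
        field_simp
        ring

section KernelMap

variable {a : ℕ → ℝ} {x : ℝ}

lemma abs_mul_pow_le (ha : ∀ k, 0 ≤ a k) (hx : |x| ≤ 1) (k : ℕ) : |a k * x ^ k| ≤ a k := by
  rw [abs_mul, abs_of_nonneg (ha k), abs_pow]
  exact mul_le_of_le_one_right (ha k) (pow_le_one₀ (abs_nonneg x) hx)

lemma hasSum_kernelMap (ha : ∀ k, 0 ≤ a k) (hs : Summable a) (hx : |x| ≤ 1) :
    HasSum (fun k => a k * x ^ k) (kernelMap a x) :=
  (Summable.of_norm_bounded hs (abs_mul_pow_le ha hx)).hasSum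

lemma abs_kernelMap_le_one (ha : ∀ k, 0 ≤ a k) (hsum : HasSum a 1) (hx : |x| ≤ 1) :
    |kernelMap a x| ≤ 1 := by
  have hκ := hasSum_kernelMap ha hsum.summable hx
  exact abs_le.2 ⟨hasSum_le (fun k => (abs_le.1 (abs_mul_pow_le ha hx k)).1) hsum.neg hκ,
    hasSum_le (fun k => (abs_le.1 (abs_mul_pow_le ha hx k)).2) hκ hsum⟩

lemma one_sub_a_zero_sub_a_one_pos (ha : ∀ k, 0 ≤ a k) (hsum : HasSum a 1)
    (hnl : ∃ k, 2 ≤ k ∧ 0 < a k) : 0 < 1 - a 0 - a 1 := by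
  obtain ⟨k, hk, hpos⟩ := hnl
  obtain ⟨m, rfl⟩ := Nat.exists_eq_add_of_le' hk
  exact hpos.trans_le (le_hasSum hsum.nat_add_two m fun j _ => ha _)

lemma mul_sq_one_sub_le_kernelMap_sub (ha : ∀ k, 0 ≤ a k) (hsum : HasSum a 1)
    (hd : HasSum (fun k : ℕ => (k : ℝ) * a k) 1) (hx : |x| ≤ 1) :
    (1 - a 0 - a 1) * (1 - x) ^ 2 ≤ kernelMap a x - x := by
  have hdefect : HasSum (fun k : ℕ => a k * (k * (1 - x) - (1 - x ^ k))) (kernelMap a x - x) := by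
    have h := (hd.mul_right (1 - x)).sub (hsum.sub (hasSum_kernelMap ha hsum.summable hx))
    rw [show 1 * (1 - x) - (1 - kernelMap a x) = kernelMap a x - x by ring] at h
    convert h using 2 with k <;> first | rfl | ring
  have htail := hdefect.nat_add_two
  simp only [Nat.cast_zero, Nat.cast_one, pow_zero, pow_one, zero_mul, one_mul, sub_self,
    mul_zero, sub_zero] at htail
  refine hasSum_le (fun n => ?_) (hsum.nat_add_two.mul_right _) htail
  exact mul_le_mul_of_nonneg_left
    (sq_one_sub_le_nat_mul_one_sub_sub_one_sub_pow hx (Nat.le_add_left 2 n)) (ha _)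

end KernelMap

theorem kernel_convergence_to_one_polynomial_general
    (a : ℕ → ℝ) (ha : ∀ k, 0 ≤ a k) (hsum : HasSum a 1)
    (hnl : ∃ k, 2 ≤ k ∧ 0 < a k)
    (hd : HasSum (fun k : ℕ => (k : ℝ) * a k) 1)
    (ρ : ℕ → ℝ) (hρ0 : ρ 0 ∈ Set.Ioo (-1 : ℝ) 1)
    (hrec : ∀ ℓ, ρ (ℓ + 1) = kernelMap a (ρ ℓ)) :
    0 < 1 - a 0 - a 1 ∧
      ∀ ℓ : ℕ, |ρ ℓ - 1| ≤ |ρ 0 - 1| / (ℓ * (1 - a 0 - a 1) * |ρ 0 - 1| + 1) := by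
  have hα := one_sub_a_zero_sub_a_one_pos ha hsum hnl
  have hρ : ∀ ℓ, |ρ ℓ| ≤ 1 := by
    intro ℓ
    induction ℓ with
    | zero => exact abs_le.2 ⟨hρ0.1.le, hρ0.2.le⟩
    | succ ℓ ih => rw [hrec]; exact abs_kernelMap_le_one ha hsum ih
  have hdist : ∀ ℓ, |ρ ℓ - 1| = 1 - ρ ℓ := fun ℓ => by
    rw [abs_sub_comm, abs_of_nonneg (by linarith [le_abs_self (ρ ℓ), hρ ℓ])]
  refine ⟨hα, fun ℓ => ?_⟩
  simp only [hdist]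
  refine le_div_nat_mul_add_one_of_le_div_mul_add_one hα.le
    (fun n => hdist n ▸ abs_nonneg _) (fun n => ?_) ℓ
  calc 1 - ρ (n + 1) ≤ (1 - ρ n) - (1 - a 0 - a 1) * (1 - ρ n) ^ 2 := by
        linarith [hrec n, mul_sq_one_sub_le_kernelMap_sub ha hsum hd (hρ n)]
    _ ≤ _ := sub_mul_sq_le_div_mul_add_one hα.le (hdist n ▸ abs_nonneg _)

/-- Case `κ(0) > 0` and `κ'(1) = 1`: polynomial convergence of the kernel sequence to `1`,
with rate constant `α = 1 - a₀ - a₁ > 0`. -/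
theorem kernel_convergence_to_one_polynomial
    (a : ℕ → ℝ) (ha : ∀ k, 0 ≤ a k) (hsum : HasSum a 1)
    (hnl : ∃ k, 2 ≤ k ∧ 0 < a k) (h0 : 0 < a 0)
    (hd : HasSum (fun k : ℕ => (k : ℝ) * a k) 1)
    (ρ : ℕ → ℝ) (hρ0 : ρ 0 ∈ Set.Ioo (-1 : ℝ) 1)
    (hrec : ∀ ℓ, ρ (ℓ + 1) = kernelMap a (ρ ℓ)) :
    0 < 1 - a 0 - a 1 ∧
      ∀ ℓ : ℕ, |ρ ℓ - 1| ≤ |ρ 0 - 1| / (ℓ * (1 - a 0 - a 1) * |ρ 0 - 1| + 1) :=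
  kernel_convergence_to_one_polynomial_general a ha hsum hnl hd ρ hρ0 hrec
end

section
/- (Doubly exponential convergence for activations with vanishing low-order Hermite coefficients.) Let m ≥ 2 and let κ be a kernel map with a_k = 0 for all k < m. Then for every ρ_0 ∈ (-1,1), the kernel sequence satisfies |ρ_ℓ| ≤ |ρ_0|^{m^ℓ} for all ℓ. -/
lemma kernelMap_abs_le (a : ℕ → ℝ) (ha : ∀ k, 0 ≤ a k) (hsum : HasSum a 1)
    (m : ℕ) (hlow : ∀ k < m, a k = 0) (x : ℝ) (hx : |x| ≤ 1) :
    |kernelMap a x| ≤ |x| ^ m := by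
  have hxa : (0:ℝ) ≤ |x| := abs_nonneg x
  have hpt : ∀ k, |a k * x ^ k| ≤ a k * |x| ^ m := by
    intro k
    rw [abs_mul, abs_of_nonneg (ha k), abs_pow]
    rcases lt_or_ge k m with h | h
    · simp [hlow k h]
    · exact mul_le_mul_of_nonneg_left (pow_le_pow_of_le_one hxa hx h) (ha k)
  have hs2 : Summable (fun k => a k * |x| ^ m) := hsum.summable.mul_right _
  have hs1 : Summable (fun k => a k * x ^ k) := by
    apply Summable.of_norm
    exact hs2.of_nonneg_of_le (fun k => norm_nonneg _) hpt
  have hub : kernelMap a x ≤ ∑' k, a k * |x| ^ m :=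
    Summable.tsum_le_tsum (fun k => (le_abs_self _).trans (hpt k)) hs1 hs2
  have hlb : -(∑' k, a k * |x| ^ m) ≤ kernelMap a x := by
    rw [← tsum_neg]
    exact Summable.tsum_le_tsum (fun k => neg_le_of_neg_le (((neg_le_abs _).trans (hpt k)).trans' (neg_le_neg le_rfl))) hs2.neg hs1
  calc |kernelMap a x| ≤ ∑' k, a k * |x| ^ m := abs_le.mpr ⟨hlb, hub⟩
    _ = |x| ^ m := by rw [(hsum.mul_right (|x| ^ m)).tsum_eq, one_mul]

/-- Doubly exponential convergence when the low-order coefficients vanish: if `a_k = 0`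
for all `k < m` with `m ≥ 2`, then `|ρ_ℓ| ≤ |ρ₀|^(m^ℓ)`. -/
theorem kernel_doubly_exponential_convergence
    (a : ℕ → ℝ) (ha : ∀ k, 0 ≤ a k) (hsum : HasSum a 1)
    (m : ℕ) (hm : 2 ≤ m) (hlow : ∀ k < m, a k = 0)
    (ρ : ℕ → ℝ) (hρ0 : ρ 0 ∈ Set.Ioo (-1 : ℝ) 1)
    (hrec : ∀ ℓ, ρ (ℓ + 1) = kernelMap a (ρ ℓ)) :
    ∀ ℓ : ℕ, |ρ ℓ| ≤ |ρ 0| ^ (m ^ ℓ) := by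
  have h0 : |ρ 0| ≤ 1 := by
    rw [abs_le]; exact ⟨hρ0.1.le, hρ0.2.le⟩
  intro ℓ
  induction ℓ with
  | zero => simp
  | succ n ih =>
    have hn1 : |ρ n| ≤ 1 := ih.trans (pow_le_one₀ (abs_nonneg _) h0)
    have := kernelMap_abs_le a ha hsum m hlow (ρ n) hn1
    rw [hrec n] at *
    calc |kernelMap a (ρ n)| ≤ |ρ n| ^ m := this
      _ ≤ (|ρ 0| ^ (m ^ n)) ^ m := pow_le_pow_left₀ (abs_nonneg _) ih m
      _ = |ρ 0| ^ (m ^ (n + 1)) := by rw [← pow_mul, pow_succ]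
end
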